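/- For an integer b ≥ 2, let M2 be the presented group on generators ρ0, ρ1, ρ2 with relation set {ρ0^2, ρ1^2, ρ2^2, (ρ0ρ1)^4, (ρ1ρ2)^4, (ρ0ρ2)^2, (ρ0ρ1ρ2)^{2b}}. Then M2 has order 16b^2, and in M2 the images of ρ0, ρ1, ρ2 and ρ0ρ2 have order exactly 2, the images of ρ0ρ1 and ρ1ρ2 have order exactly 4, and the image of ρ0ρ1ρ2 has order exactly 2b. -/

import Mathlib

/-!
Write `u = ρ₀ρ₁ρ₂ρ₁`, `v = (ρ₀ρ₁ρ₂)²` and `r = ρ₁ρ₂`. The `{4,4}` relations alone make `u` and `v`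
commute and make conjugation by `ρ₁` and `ρ₂` preserve `⟨u, v⟩`; as moreover `ρ₁ r ρ₁ = r⁻¹` and
`ρ₀ = u ρ₁ ρ₂ ρ₁`, left multiplication by any generator maps the words `u^i v^j r^k ρ₁^e` to
words of the same shape, so every element is such a word. The relation on the Petrie element,
`(ρ₀ρ₁ρ₂)^(2b) = 1`, gives `v^b = 1` and then `u^(2b) = 1`, which leaves at most
`2b · b · 4 · 2 = 16 b²` words.

Conversely `ρ₀, ρ₁, ρ₂` act on the torus `(ℤ/2b)²` as the reflections in the lines `x + y = 1`,
`y = 0` and `x = y`. There `u` and `v` are the translations by `(1,1)` and `(2,0)` while `r` and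
`ρ₁` fix the origin, so the image of the origin recovers `(i, j)`; the sign character (all relators
have even length) recovers `e`, and `r` has order `4`. Hence the `16 b²` words are distinct, and the
same action gives the orders.
-/

namespace Stmt6

def r0 : FreeGroup (Fin 3) := FreeGroup.of 0
def r1 : FreeGroup (Fin 3) := FreeGroup.of 1
def r2 : FreeGroup (Fin 3) := FreeGroup.of 2

/-- The relations of the presented group `M2` of Proposition 2.3. -/
def rels (b : ℕ) : Set (FreeGroup (Fin 3)) :=
  {r0 ^ 2, r1 ^ 2, r2 ^ 2, (r0 * r1) ^ 4, (r1 * r2) ^ 4, (r0 * r2) ^ 2,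
   (r0 * r1 * r2) ^ (2 * b)}

/-- The image of the `i`-th generator in `M2`. -/
def g (b : ℕ) (i : Fin 3) : PresentedGroup (rels b) := PresentedGroup.of i

section Type44

variable {G : Type*} [Group G]

theorem mul_comm_of_mul_sq_eq_one {x y : G} (hx : x * x = 1) (hy : y * y = 1)
    (hxy : (x * y) ^ 2 = 1) : y * x = x * y := by
  have h := inv_eq_of_mul_eq_one_right ((sq (x * y)).symm.trans hxy)
  rwa [mul_inv_rev, inv_eq_of_mul_eq_one_right hx, inv_eq_of_mul_eq_one_right hy] at h

theorem braid_of_mul_pow_four_eq_one {x y : G} (hx : x * x = 1) (hy : y * y = 1)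
    (hxy : (x * y) ^ 4 = 1) : y * (x * (y * x)) = x * (y * (x * y)) := by
  have h : ((x * y) ^ 2)⁻¹ = (x * y) ^ 2 :=
    inv_eq_of_mul_eq_one_right (by rw [← pow_add]; exact hxy)
  simpa [sq, inv_eq_of_mul_eq_one_right hx, inv_eq_of_mul_eq_one_right hy, mul_assoc] using h

theorem conj_zpow_of_mul_self_eq_one {s x : G} (hs : s * s = 1) (n : ℤ) :
    s * x ^ n * s = (s * x * s) ^ n := by
  simpa only [inv_eq_of_mul_eq_one_right hs] using (conj_zpow (a := s) (b := x)).symm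

theorem exists_fin_zpow_eq_pow {x : G} {n : ℕ} (hn : 0 < n) (hx : x ^ n = 1) (m : ℤ) :
    ∃ r : Fin n, x ^ m = x ^ (r : ℕ) := by
  have hnonneg : 0 ≤ m % n := Int.emod_nonneg m (by omega)
  have hlt : m % n < n := Int.emod_lt_of_pos m (by omega)
  refine ⟨⟨(m % n).toNat, by omega⟩, ?_⟩
  rw [zpow_eq_zpow_emod' m hx, ← zpow_natCast, Int.toNat_of_nonneg hnonneg]

/-- The relations of the Coxeter group `[4,4]`, i.e. of a string C-group of type `{4,4}`. -/
structure IsType44 (ρ : Fin 3 → G) : Prop where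
  mul_self : ∀ i, ρ i * ρ i = 1
  pow_four_zero_one : (ρ 0 * ρ 1) ^ 4 = 1
  pow_four_one_two : (ρ 1 * ρ 2) ^ 4 = 1
  sq_zero_two : (ρ 0 * ρ 2) ^ 2 = 1

def diagTranslation (ρ : Fin 3 → G) : G := ρ 0 * ρ 1 * ρ 2 * ρ 1
def axisTranslation (ρ : Fin 3 → G) : G := (ρ 0 * ρ 1 * ρ 2) ^ 2
def rotation (ρ : Fin 3 → G) : G := ρ 1 * ρ 2

def normalForm (ρ : Fin 3 → G) (i j k e : ℤ) : G :=
  diagTranslation ρ ^ i * axisTranslation ρ ^ j * (rotation ρ ^ k * ρ 1 ^ e)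

def normalFormOfFin (ρ : Fin 3 → G) (n : ℕ) (p : Fin (2 * n) × Fin n × Fin 4 × Fin 2) : G :=
  diagTranslation ρ ^ (p.1 : ℕ) * axisTranslation ρ ^ (p.2.1 : ℕ) *
    (rotation ρ ^ (p.2.2.1 : ℕ) * ρ 1 ^ (p.2.2.2 : ℕ))

theorem diagTranslation_mul_normalForm (ρ : Fin 3 → G) (i j k e : ℤ) :
    diagTranslation ρ * normalForm ρ i j k e = normalForm ρ (i + 1) j k e := by
  simp only [normalForm, mul_assoc, add_comm i 1, zpow_one_add]

theorem map_normalFormOfFin {H : Type*} [Group H] (f : G →* H) (ρ : Fin 3 → G) (n : ℕ)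
    (p : Fin (2 * n) × Fin n × Fin 4 × Fin 2) :
    f (normalFormOfFin ρ n p) = normalFormOfFin (f ∘ ρ) n p := by
  simp [normalFormOfFin, diagTranslation, axisTranslation, rotation]

namespace IsType44

variable {ρ : Fin 3 → G}

theorem inv_eq (h : IsType44 ρ) (i : Fin 3) : (ρ i)⁻¹ = ρ i :=
  inv_eq_of_mul_eq_one_right (h.mul_self i)

/-! Oriented rewrite rules: together with `mul_assoc` they bring words to a normal form. -/

theorem mul_self_mul (h : IsType44 ρ) (i : Fin 3) (w : G) : ρ i * (ρ i * w) = w := by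
  rw [← mul_assoc, h.mul_self, one_mul]

theorem two_mul_zero_mul (h : IsType44 ρ) (w : G) : ρ 2 * (ρ 0 * w) = ρ 0 * (ρ 2 * w) := by
  rw [← mul_assoc, mul_comm_of_mul_sq_eq_one (h.mul_self 0) (h.mul_self 2) h.sq_zero_two,
    mul_assoc]

theorem braid_zero_one (h : IsType44 ρ) :
    ρ 1 * (ρ 0 * (ρ 1 * ρ 0)) = ρ 0 * (ρ 1 * (ρ 0 * ρ 1)) :=
  braid_of_mul_pow_four_eq_one (h.mul_self 0) (h.mul_self 1) h.pow_four_zero_one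

theorem braid_one_two (h : IsType44 ρ) :
    ρ 2 * (ρ 1 * (ρ 2 * ρ 1)) = ρ 1 * (ρ 2 * (ρ 1 * ρ 2)) :=
  braid_of_mul_pow_four_eq_one (h.mul_self 1) (h.mul_self 2) h.pow_four_one_two

theorem braid_zero_one_mul (h : IsType44 ρ) (w : G) :
    ρ 1 * (ρ 0 * (ρ 1 * (ρ 0 * w))) = ρ 0 * (ρ 1 * (ρ 0 * (ρ 1 * w))) := by
  simpa only [mul_assoc] using congrArg (· * w) h.braid_zero_one

theorem braid_one_two_mul (h : IsType44 ρ) (w : G) :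
    ρ 2 * (ρ 1 * (ρ 2 * (ρ 1 * w))) = ρ 1 * (ρ 2 * (ρ 1 * (ρ 2 * w))) := by
  simpa only [mul_assoc] using congrArg (· * w) h.braid_one_two

theorem commute_translations (h : IsType44 ρ) :
    Commute (diagTranslation ρ) (axisTranslation ρ) := by
  simp only [Commute, SemiconjBy, diagTranslation, axisTranslation, sq, mul_assoc]
  simp only [h.two_mul_zero_mul, h.braid_zero_one_mul, h.braid_one_two]

theorem one_conj_diagTranslation (h : IsType44 ρ) :
    ρ 1 * diagTranslation ρ * ρ 1 = (diagTranslation ρ)⁻¹ * axisTranslation ρ := by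
  simp only [diagTranslation, axisTranslation, sq, mul_inv_rev, h.inv_eq, mul_assoc]
  simp only [h.mul_self_mul, h.two_mul_zero_mul, h.mul_self, mul_one]

theorem one_conj_axisTranslation (h : IsType44 ρ) :
    ρ 1 * axisTranslation ρ * ρ 1 = axisTranslation ρ := by
  simp only [axisTranslation, sq, mul_assoc]
  simp only [h.mul_self_mul, h.two_mul_zero_mul, h.braid_zero_one_mul, h.braid_one_two]

theorem two_conj_diagTranslation (h : IsType44 ρ) :
    ρ 2 * diagTranslation ρ * ρ 2 = diagTranslation ρ := by
  simp only [diagTranslation, mul_assoc]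
  simp only [h.two_mul_zero_mul, h.braid_one_two_mul, h.mul_self, mul_one]

theorem two_conj_axisTranslation (h : IsType44 ρ) :
    ρ 2 * axisTranslation ρ * ρ 2 = diagTranslation ρ ^ 2 * (axisTranslation ρ)⁻¹ := by
  simp only [diagTranslation, axisTranslation, sq, mul_inv_rev, h.inv_eq, mul_assoc]
  simp only [h.mul_self_mul, h.two_mul_zero_mul, h.braid_one_two_mul, h.braid_zero_one,
    h.mul_self, mul_one]

theorem one_mul_rotation_zpow (h : IsType44 ρ) (k : ℤ) :
    ρ 1 * rotation ρ ^ k = rotation ρ ^ (-k) * ρ 1 := by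
  have hr : ρ 1 * rotation ρ * ρ 1 = (rotation ρ)⁻¹ := by
    simp only [rotation, mul_inv_rev, h.inv_eq, h.mul_self_mul]
  rw [zpow_neg, ← inv_zpow, ← hr, ← conj_zpow_of_mul_self_eq_one (h.mul_self 1), mul_assoc,
    h.mul_self, mul_one]

theorem one_mul_normalForm (h : IsType44 ρ) (i j k e : ℤ) :
    ρ 1 * normalForm ρ i j k e = normalForm ρ (-i) (i + j) (-k) (e + 1) := by
  have hsplit : ρ 1 * normalForm ρ i j k e = (ρ 1 * diagTranslation ρ ^ i * ρ 1) *
      (ρ 1 * axisTranslation ρ ^ j * ρ 1) * (ρ 1 * rotation ρ ^ k * ρ 1 ^ e) := by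
    simp only [normalForm, mul_assoc, h.mul_self_mul]
  rw [hsplit, conj_zpow_of_mul_self_eq_one (h.mul_self 1),
    conj_zpow_of_mul_self_eq_one (h.mul_self 1), h.one_conj_diagTranslation,
    h.one_conj_axisTranslation, h.one_mul_rotation_zpow,
    h.commute_translations.inv_left.mul_zpow, normalForm]
  group

theorem two_mul_normalForm (h : IsType44 ρ) (i j k e : ℤ) :
    ρ 2 * normalForm ρ i j k e = normalForm ρ (i + 2 * j) (-j) (-k - 1) (e + 1) := by
  have hsplit : ρ 2 * normalForm ρ i j k e = (ρ 2 * diagTranslation ρ ^ i * ρ 2) *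
      (ρ 2 * axisTranslation ρ ^ j * ρ 2) * (ρ 1 * (rotation ρ ^ (1 + k) * ρ 1 ^ e)) := by
    -- `ρ₂ = ρ₁ r`
    simp only [normalForm, zpow_one_add, rotation, mul_assoc, h.mul_self_mul]
  rw [hsplit, conj_zpow_of_mul_self_eq_one (h.mul_self 2),
    conj_zpow_of_mul_self_eq_one (h.mul_self 2), h.two_conj_diagTranslation,
    h.two_conj_axisTranslation, ← mul_assoc (ρ 1), h.one_mul_rotation_zpow,
    ((h.commute_translations.pow_left 2).inv_right).mul_zpow, normalForm]
  group

theorem zero_eq (h : IsType44 ρ) : ρ 0 = diagTranslation ρ * ρ 1 * ρ 2 * ρ 1 := by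
  simp only [diagTranslation, mul_assoc, h.mul_self, mul_one]

theorem exists_eq_normalForm (h : IsType44 ρ) (hρ : Subgroup.closure (Set.range ρ) = ⊤)
    (x : G) : ∃ i j k e, x = normalForm ρ i j k e := by
  have hmul : ∀ a y, (∃ i j k e, y = normalForm ρ i j k e) →
      ∃ i j k e, ρ a * y = normalForm ρ i j k e := by
    rintro a y ⟨i, j, k, e, rfl⟩
    match a with
    | 0 =>
      simp only [h.zero_eq, mul_assoc, h.one_mul_normalForm, h.two_mul_normalForm,
        diagTranslation_mul_normalForm]
      exact ⟨_, _, _, _, rfl⟩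
    | 1 => exact ⟨_, _, _, _, h.one_mul_normalForm i j k e⟩
    | 2 => exact ⟨_, _, _, _, h.two_mul_normalForm i j k e⟩
  induction (hρ ▸ Subgroup.mem_top x : x ∈ Subgroup.closure (Set.range ρ))
    using Subgroup.closure_induction_left with
  | one => exact ⟨0, 0, 0, 0, by simp [normalForm]⟩
  | mul_left _ ha _ _ hy => obtain ⟨a, rfl⟩ := ha; exact hmul a _ hy
  | inv_mul_cancel _ ha _ _ hy => obtain ⟨a, rfl⟩ := ha; rw [h.inv_eq]; exact hmul a _ hy

theorem diagTranslation_pow_two_mul (h : IsType44 ρ) {n : ℕ} (hn : axisTranslation ρ ^ n = 1) :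
    diagTranslation ρ ^ (2 * n) = 1 := by
  have hsq : diagTranslation ρ ^ 2 = (ρ 2 * axisTranslation ρ * ρ 2) * axisTranslation ρ := by
    rw [h.two_conj_axisTranslation, inv_mul_cancel_right]
  have hcomm : Commute (ρ 2 * axisTranslation ρ * ρ 2) (axisTranslation ρ) := by
    rw [h.two_conj_axisTranslation]
    exact (h.commute_translations.pow_left 2).mul_left (Commute.refl _).inv_left
  rw [pow_mul, hsq, hcomm.mul_pow, ← zpow_natCast,
    ← conj_zpow_of_mul_self_eq_one (h.mul_self 2), zpow_natCast, hn, mul_one, mul_one,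
    h.mul_self]

theorem normalFormOfFin_surjective (h : IsType44 ρ) (hρ : Subgroup.closure (Set.range ρ) = ⊤)
    {n : ℕ} (hn : 0 < n) (hpetrie : (ρ 0 * ρ 1 * ρ 2) ^ (2 * n) = 1) :
    Function.Surjective (normalFormOfFin ρ n) := by
  intro x
  obtain ⟨i, j, k, e, rfl⟩ := h.exists_eq_normalForm hρ x
  have hv : axisTranslation ρ ^ n = 1 := by rwa [axisTranslation, ← pow_mul]
  obtain ⟨i', hi⟩ := exists_fin_zpow_eq_pow (by omega) (h.diagTranslation_pow_two_mul hv) i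
  obtain ⟨j', hj⟩ := exists_fin_zpow_eq_pow hn hv j
  obtain ⟨k', hk⟩ := exists_fin_zpow_eq_pow (x := rotation ρ) (by norm_num) h.pow_four_one_two k
  obtain ⟨e', he⟩ := exists_fin_zpow_eq_pow (by norm_num) ((sq _).trans (h.mul_self 1)) e
  exact ⟨(i', j', k', e'), by rw [normalForm, hi, hj, hk, he]; rfl⟩

end IsType44

end Type44

theorem map_pow_apply_of_map_apply_eq_add {α A : Type*} [AddMonoid A] {σ : Equiv.Perm α}
    {f : α → A} {t : A} (hσ : ∀ p, f (σ p) = f p + t) (m : ℕ) (p : α) :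
    f ((σ ^ m) p) = f p + m • t := by
  induction m with
  | zero => simp
  | succ m ih => rw [pow_succ', Equiv.Perm.mul_apply, hσ, ih, succ_nsmul, add_assoc]

theorem pow_apply_of_apply_eq_add {α : Type*} [AddMonoid α] {σ : Equiv.Perm α} {t : α}
    (hσ : ∀ p, σ p = p + t) (m : ℕ) (p : α) : (σ ^ m) p = p + m • t :=
  map_pow_apply_of_map_apply_eq_add (f := id) hσ m p

section Torus

variable {n : ℕ}

def torusReflection (n : ℕ) : Fin 3 → Equiv.Perm (ZMod n × ZMod n) :=
  ![Function.Involutive.toPerm (fun p => (1 - p.2, 1 - p.1)) (fun p => by simp),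
    Function.Involutive.toPerm (fun p => (p.1, -p.2)) (fun p => by simp),
    Equiv.prodComm _ _]

@[simp] theorem torusReflection_zero_apply (p : ZMod n × ZMod n) :
    torusReflection n 0 p = (1 - p.2, 1 - p.1) := rfl

@[simp] theorem torusReflection_one_apply (p : ZMod n × ZMod n) :
    torusReflection n 1 p = (p.1, -p.2) := rfl

@[simp] theorem torusReflection_two_apply (p : ZMod n × ZMod n) :
    torusReflection n 2 p = (p.2, p.1) := rfl

theorem torusReflection_diagTranslation_apply (p : ZMod n × ZMod n) :
    diagTranslation (torusReflection n) p = p + (1, 1) := by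
  ext <;> simp only [diagTranslation, Equiv.Perm.mul_apply, torusReflection_zero_apply,
    torusReflection_one_apply, torusReflection_two_apply, Prod.fst_add, Prod.snd_add] <;> ring

theorem torusReflection_axisTranslation_apply (p : ZMod n × ZMod n) :
    axisTranslation (torusReflection n) p = p + (2, 0) := by
  ext <;> simp only [axisTranslation, sq, Equiv.Perm.mul_apply, torusReflection_zero_apply,
    torusReflection_one_apply, torusReflection_two_apply, Prod.fst_add, Prod.snd_add] <;> ring

theorem normalFormOfFin_torusReflection_apply_zero {m : ℕ}
    (p : Fin (2 * m) × Fin m × Fin 4 × Fin 2) :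
    normalFormOfFin (torusReflection n) m p 0 =
      (((p.1 + 2 * p.2.1 : ℕ) : ZMod n), ((p.1 : ℕ) : ZMod n)) := by
  have hfix : (rotation (torusReflection n) ^ (p.2.2.1 : ℕ) * torusReflection n 1 ^ (p.2.2.2 : ℕ)) 0
      = 0 := by
    rw [Equiv.Perm.mul_apply,
      Equiv.Perm.pow_apply_eq_self_of_apply_eq_self (f := torusReflection n 1) (by simp),
      Equiv.Perm.pow_apply_eq_self_of_apply_eq_self (by simp [rotation])]
  rw [normalFormOfFin, Equiv.Perm.mul_apply, Equiv.Perm.mul_apply, hfix,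
    pow_apply_of_apply_eq_add torusReflection_diagTranslation_apply,
    pow_apply_of_apply_eq_add torusReflection_axisTranslation_apply]
  ext <;> simp only [Prod.smul_mk, nsmul_eq_mul, zero_add, mul_one, Prod.mk_add_mk,
    Nat.cast_add, Nat.cast_mul, Nat.cast_ofNat] <;> ring

theorem torusReflection_petrie_pow_apply_fst (m : ℕ) (p : ZMod n × ZMod n) :
    (((torusReflection n 0 * torusReflection n 1 * torusReflection n 2) ^ m) p).1 = p.1 + m := by
  simpa using map_pow_apply_of_map_apply_eq_add (f := Prod.fst) (t := (1 : ZMod n))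
    (fun p => by simp only [Equiv.Perm.mul_apply, torusReflection_zero_apply,
      torusReflection_one_apply, torusReflection_two_apply]; ring) m p

theorem torusReflection_petrie_pow_two_mul (b : ℕ) :
    (torusReflection (2 * b) 0 * torusReflection (2 * b) 1 * torusReflection (2 * b) 2) ^ (2 * b)
      = 1 := by
  have hb : (b • (2, 0) : ZMod (2 * b) × ZMod (2 * b)) = 0 := by
    ext
    · simpa [mul_comm] using ZMod.natCast_self (2 * b)
    · simp
  refine Equiv.ext fun p => ?_
  rw [pow_mul, pow_apply_of_apply_eq_add torusReflection_axisTranslation_apply, hb, add_zero,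
    Equiv.Perm.one_apply]

end Torus

theorem torusReflection_rels (b : ℕ) :
    ∀ r ∈ rels b, FreeGroup.lift (torusReflection (2 * b)) r = 1 := by
  intro r hr
  simp only [rels, Set.mem_insert_iff, Set.mem_singleton_iff] at hr
  rcases hr with rfl | rfl | rfl | rfl | rfl | rfl | rfl <;>
    simp only [r0, r1, r2, map_pow, map_mul, FreeGroup.lift_apply_of,
      torusReflection_petrie_pow_two_mul] <;>
    ext p <;> simp [pow_succ]

def toTorus (b : ℕ) : PresentedGroup (rels b) →* Equiv.Perm (ZMod (2 * b) × ZMod (2 * b)) :=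
  PresentedGroup.toGroup (torusReflection_rels b)

def parity (b : ℕ) : PresentedGroup (rels b) →* ℤˣ :=
  PresentedGroup.toGroup (f := fun _ => -1) (by
    intro r hr
    simp only [rels, Set.mem_insert_iff, Set.mem_singleton_iff] at hr
    rcases hr with rfl | rfl | rfl | rfl | rfl | rfl | rfl <;> simp [r0, r1, r2, pow_mul])

theorem normalFormOfFin_neg_one {n : ℕ} (p : Fin (2 * n) × Fin n × Fin 4 × Fin 2) :
    normalFormOfFin (fun _ => (-1 : ℤˣ)) n p = (-1) ^ (p.2.2.2 : ℕ) := by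
  simp [normalFormOfFin, diagTranslation, axisTranslation, rotation]

section M2

variable (b : ℕ)

theorem isType44_g : IsType44 (g b) where
  mul_self i := by
    rw [← sq]
    fin_cases i <;> exact PresentedGroup.one_of_mem (by simp [rels, r0, r1, r2])
  pow_four_zero_one := PresentedGroup.one_of_mem (by simp [rels, r0, r1, r2])
  pow_four_one_two := PresentedGroup.one_of_mem (by simp [rels, r0, r1, r2])
  sq_zero_two := PresentedGroup.one_of_mem (by simp [rels, r0, r1, r2])

theorem g_petrie_pow : (g b 0 * g b 1 * g b 2) ^ (2 * b) = 1 :=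
  PresentedGroup.one_of_mem (by simp [rels, r0, r1, r2])

theorem toTorus_comp_g : toTorus b ∘ g b = torusReflection (2 * b) :=
  funext fun _ => PresentedGroup.toGroup.of _

@[simp] theorem parity_g (i : Fin 3) : parity b (g b i) = -1 :=
  PresentedGroup.toGroup.of _

theorem parity_comp_g : parity b ∘ g b = fun _ => -1 :=
  funext (parity_g b)

@[simp] theorem toTorus_g (i : Fin 3) : toTorus b (g b i) = torusReflection (2 * b) i :=
  congrFun (toTorus_comp_g b) i

theorem orderOf_g (i : Fin 3) : orderOf (g b i) = 2 :=
  orderOf_eq_prime ((sq _).trans ((isType44_g b).mul_self i)) fun h1 => by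
    have h := congrArg (parity b) h1
    rw [parity_g, map_one] at h
    exact absurd h (by decide)

theorem orderOf_g_zero_mul_g_two (hb : 0 < b) : orderOf (g b 0 * g b 2) = 2 :=
  orderOf_eq_prime (isType44_g b).sq_zero_two fun h1 => by
    have : Fact (1 < 2 * b) := ⟨by omega⟩
    simpa using DFunLike.congr_fun (congrArg (toTorus b) h1) 0

theorem orderOf_g_zero_mul_g_one (hb : 2 ≤ b) : orderOf (g b 0 * g b 1) = 4 := by
  have : Fact (2 < 2 * b) := ⟨by omega⟩
  refine orderOf_eq_prime_pow (p := 2) (n := 1) (fun h1 => ZMod.neg_one_ne_one (n := 2 * b) ?_)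
    (isType44_g b).pow_four_zero_one
  exact neg_eq_of_add_eq_zero_left <| by
    simpa [sq] using DFunLike.congr_fun (congrArg (toTorus b) h1) 0

theorem orderOf_rotation_g (hb : 2 ≤ b) : orderOf (rotation (g b)) = 4 := by
  have : Fact (2 < 2 * b) := ⟨by omega⟩
  refine orderOf_eq_prime_pow (p := 2) (n := 1) (fun h1 => ZMod.neg_one_ne_one (n := 2 * b) ?_)
    (isType44_g b).pow_four_one_two
  simpa [rotation, sq] using DFunLike.congr_fun (congrArg (toTorus b) h1) (1, 0)

theorem orderOf_petrie_g : orderOf (g b 0 * g b 1 * g b 2) = 2 * b := by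
  refine Nat.dvd_antisymm (orderOf_dvd_of_pow_eq_one (g_petrie_pow b)) ?_
  refine dvd_trans ?_ (orderOf_map_dvd (toTorus b) _)
  rw [map_mul, map_mul, toTorus_g, toTorus_g, toTorus_g]
  have h := torusReflection_petrie_pow_apply_fst (n := 2 * b)
    (orderOf (torusReflection (2 * b) 0 * torusReflection (2 * b) 1 * torusReflection (2 * b) 2)) 0
  rw [pow_orderOf_eq_one, Equiv.Perm.one_apply, Prod.fst_zero, zero_add, eq_comm,
    ZMod.natCast_eq_zero_iff] at h
  exact h

theorem normalFormOfFin_g_injective (hb : 2 ≤ b) :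
    Function.Injective (normalFormOfFin (g b) b) := by
  rintro ⟨i, j, k, e⟩ ⟨i', j', k', e'⟩ heq
  have he : e = e' := by
    have h := congrArg (parity b) heq
    rw [map_normalFormOfFin, map_normalFormOfFin, parity_comp_g, normalFormOfFin_neg_one,
      normalFormOfFin_neg_one] at h
    fin_cases e <;> fin_cases e' <;> simp_all
  have hij : i = i' ∧ j = j' := by
    have h := DFunLike.congr_fun (congrArg (toTorus b) heq) 0
    rw [map_normalFormOfFin, map_normalFormOfFin, toTorus_comp_g,
      normalFormOfFin_torusReflection_apply_zero, normalFormOfFin_torusReflection_apply_zero,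
      Prod.mk.injEq] at h
    obtain ⟨h1, h2⟩ := h
    dsimp only at h1 h2
    have hi : (i : ℕ) = i' := by
      rwa [ZMod.natCast_eq_natCast_iff', Nat.mod_eq_of_lt i.2, Nat.mod_eq_of_lt i'.2] at h2
    rw [hi, Nat.cast_add, Nat.cast_add, add_right_inj, ZMod.natCast_eq_natCast_iff',
      Nat.mod_eq_of_lt (by omega), Nat.mod_eq_of_lt (by omega)] at h1
    exact ⟨Fin.ext hi, Fin.ext (by omega)⟩
  obtain ⟨rfl, rfl⟩ := hij
  subst he
  have hk : rotation (g b) ^ (k : ℕ) = rotation (g b) ^ (k' : ℕ) :=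
    mul_right_cancel (mul_left_cancel heq)
  have hlt : ∀ m : Fin 4, (m : ℕ) ∈ Set.Iio (orderOf (rotation (g b))) := fun m => by
    rw [Set.mem_Iio, orderOf_rotation_g b hb]
    exact m.2
  rw [Fin.ext (pow_injOn_Iio_orderOf (hlt k) (hlt k') hk)]

theorem card_presentedGroup_rels (hb : 2 ≤ b) :
    Nat.card (PresentedGroup (rels b)) = 16 * b ^ 2 := by
  have hbij : Function.Bijective (normalFormOfFin (g b) b) :=
    ⟨normalFormOfFin_g_injective b hb, (isType44_g b).normalFormOfFin_surjective
      (PresentedGroup.closure_range_of _) (by omega) (g_petrie_pow b)⟩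
  rw [← Nat.card_eq_of_bijective _ hbij, Nat.card_eq_fintype_card]
  simp only [Fintype.card_prod, Fintype.card_fin]
  ring

end M2

/-- Proposition 2.3, group `M2`: it has order `16 b^2` and the listed exponents
are the true orders. -/
theorem stmt_6 (b : ℕ) (hb : 2 ≤ b) :
    Nat.card (PresentedGroup (rels b)) = 16 * b ^ 2 ∧
    orderOf (g b 0) = 2 ∧ orderOf (g b 1) = 2 ∧ orderOf (g b 2) = 2 ∧
    orderOf (g b 0 * g b 2) = 2 ∧
    orderOf (g b 0 * g b 1) = 4 ∧ orderOf (g b 1 * g b 2) = 4 ∧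
    orderOf (g b 0 * g b 1 * g b 2) = 2 * b :=
  ⟨card_presentedGroup_rels b hb, orderOf_g b 0, orderOf_g b 1, orderOf_g b 2,
    orderOf_g_zero_mul_g_two b (by omega), orderOf_g_zero_mul_g_one b hb,
    orderOf_rotation_g b hb, orderOf_petrie_g b⟩

end Stmt6
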